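/- arXiv:2310.18672 — 2 statements merged into one kernel-verified Lean document; each statement's English description precedes it below -/
import Mathlib

section
/- Let CMP be a comparator on finite graphs and let A^CMP be the induced randomized recursive algorithm (choosing the branching vertex uniformly at random among vertices of positive degree). If CMP is consistent — i.e., for all graphs G, G', CMP(G, G') = 0 if and only if E[|A^CMP(G)|] ≥ E[|A^CMP(G')|] — then E[|A^CMP(G)|] = |MIS(G)| for every finite graph G. -/
/-- A set of vertices is independent: pairwise nonadjacent. -/
def IsIndepSet {W : Type*} (G : SimpleGraph W) (s : Set W) : Prop :=
  s.Pairwise fun a b => ¬ G.Adj a b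

/-- The size of a maximum independent set of `G`. -/
noncomputable def misSize {W : Type*} (G : SimpleGraph W) : ℕ :=
  sSup {n | ∃ s : Finset W, IsIndepSet G ↑s ∧ s.card = n}

/-- The vertices of the remaining set `A` having positive degree in the induced
subgraph on `A`, i.e. the candidates for the uniformly random branching vertex. -/
def branchSet {V : Type*} [DecidableEq V] (G : SimpleGraph V) [DecidableRel G.Adj]
    (A : Finset V) : Finset V :=
  A.filter fun v => ∃ u ∈ A, G.Adj v u

/-- The remaining vertex set after branching at `v`: the algorithm moves to
`G₀ = G / {v}` if `CMP G₀ G₁ = false` (i.e. `0`) and to `G₁ = G / N(v)` otherwise. -/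
def childSet {V : Type*} [DecidableEq V] [Fintype V] (G : SimpleGraph V)
    [DecidableRel G.Adj] (CMP : Finset V → Finset V → Bool) (A : Finset V) (v : V) :
    Finset V :=
  if CMP (A.erase v) (A \ G.neighborFinset v) = false
  then A.erase v else A \ G.neighborFinset v

section Aux

variable {V : Type*} [Fintype V] [DecidableEq V] (G : SimpleGraph V) [DecidableRel G.Adj]

/-- Cards of independent subsets of `A`. -/
def Mset (A : Finset V) : Set ℕ :=
  {n | ∃ s : Finset V, s ⊆ A ∧ IsIndepSet G ↑s ∧ s.card = n}

noncomputable def Mnum (A : Finset V) : ℕ := sSup (Mset G A)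

lemma Mset_nonempty (A : Finset V) : (Mset G A).Nonempty :=
  ⟨0, ∅, by simp [IsIndepSet]⟩

lemma Mset_bdd (A : Finset V) : BddAbove (Mset G A) :=
  ⟨A.card, fun n ⟨s, hs, _, hc⟩ => hc ▸ Finset.card_le_card hs⟩

lemma le_Mnum {A s : Finset V} (hs : s ⊆ A) (hi : IsIndepSet G ↑s) : s.card ≤ Mnum G A :=
  le_csSup (Mset_bdd G A) ⟨s, hs, hi, rfl⟩

lemma Mnum_mem (A : Finset V) : Mnum G A ∈ Mset G A :=
  Nat.sSup_mem (Mset_nonempty G A) (Mset_bdd G A)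

lemma misSize_eq (A : Finset V) : misSize (G.induce (↑A : Set V)) = Mnum G A := by
  unfold misSize Mnum
  congr 1
  ext n
  constructor
  · rintro ⟨s, hi, rfl⟩
    refine ⟨s.map (Function.Embedding.subtype _), ?_, ?_, by simp⟩
    · intro x hx
      simp only [Finset.mem_map, Function.Embedding.coe_subtype] at hx
      obtain ⟨a, _, rfl⟩ := hx
      exact a.2
    · intro x hx y hy hxy
      simp only [Finset.coe_map, Set.mem_image, Finset.mem_coe,
        Function.Embedding.coe_subtype] at hx hy
      obtain ⟨a, ha, rfl⟩ := hx
      obtain ⟨b, hb, rfl⟩ := hy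
      exact hi ha hb (fun h => hxy (by rw [h]))
  · rintro ⟨s, hsub, hi, rfl⟩
    refine ⟨s.subtype (· ∈ A), ?_, ?_⟩
    · intro x hx y hy hxy
      rw [Finset.mem_coe, Finset.mem_subtype] at hx hy
      exact hi hx hy (fun h => hxy (Subtype.ext h))
    · rw [Finset.card_subtype, Finset.filter_true_of_mem (fun x hx => hsub hx)]

lemma Mnum_leaf {A : Finset V} (h : branchSet G A = ∅) : Mnum G A = A.card := by
  have hind : IsIndepSet G (↑A : Set V) := by
    intro x hx y hy _ hadj
    have : x ∈ branchSet G A := Finset.mem_filter.2 ⟨hx, y, hy, hadj⟩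
    simp [h] at this
  refine le_antisymm (csSup_le (Mset_nonempty G A) ?_) (le_Mnum G le_rfl hind)
  rintro n ⟨s, hs, _, rfl⟩
  exact Finset.card_le_card hs

lemma Mnum_branch {A : Finset V} {v : V} (hv : v ∈ branchSet G A) :
    Mnum G A = max (Mnum G (A.erase v)) (Mnum G (A \ G.neighborFinset v)) := by
  obtain ⟨hvA, u, huA, hadj⟩ := by
    simpa [branchSet] using hv
  refine le_antisymm ?_ (max_le ?_ ?_)
  · obtain ⟨s, hs, hi, hc⟩ := Mnum_mem G A
    rw [← hc]
    by_cases hvs : v ∈ s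
    · refine le_trans (le_Mnum G ?_ hi) (le_max_right _ _)
      intro x hx
      refine Finset.mem_sdiff.2 ⟨hs hx, fun hn => ?_⟩
      have hxv : x ≠ v := fun h => by
        rw [h] at hn; exact G.irrefl (G.mem_neighborFinset v v |>.1 hn)
      exact hi hx hvs hxv ((G.mem_neighborFinset v x).1 hn).symm
    · refine le_trans (le_Mnum G ?_ hi) (le_max_left _ _)
      exact fun x hx => Finset.mem_erase.2 ⟨fun h => hvs (h ▸ hx), hs hx⟩
  · obtain ⟨s, hs, hi, hc⟩ := Mnum_mem G (A.erase v)
    rw [← hc]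
    exact le_Mnum G (hs.trans (Finset.erase_subset _ _)) hi
  · obtain ⟨s, hs, hi, hc⟩ := Mnum_mem G (A \ G.neighborFinset v)
    rw [← hc]
    exact le_Mnum G (hs.trans (Finset.sdiff_subset)) hi

end Aux

/-- let `e A` be the expected output size `E[|A^CMP|]` of the
randomized comparator-induced algorithm run on the induced subgraph on `A`
(characterized by its defining recurrence: on an edgeless graph it returns all
vertices, otherwise it branches at a uniformly random vertex of positive degree).
If the comparator is consistent, i.e. `CMP G G' = 0` iff `E[|A^CMP(G)|] ≥ E[|A^CMP(G')|]`,
then the expected output size equals the maximum independent set size on every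
(induced sub)graph. -/
theorem stmt10 {V : Type*} [Fintype V] [DecidableEq V] (G : SimpleGraph V)
    [DecidableRel G.Adj] (CMP : Finset V → Finset V → Bool) (e : Finset V → ℝ)
    (hleaf : ∀ A : Finset V, branchSet G A = ∅ → e A = A.card)
    (hrec : ∀ A : Finset V, (branchSet G A).Nonempty →
      e A = (∑ v ∈ branchSet G A, e (childSet G CMP A v)) / (branchSet G A).card)
    (hcons : ∀ A B : Finset V, CMP A B = false ↔ e B ≤ e A) :
    ∀ A : Finset V, e A = misSize (G.induce (↑A : Set V)) := by
  suffices h : ∀ n, ∀ A : Finset V, A.card ≤ n → e A = Mnum G A by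
    intro A
    rw [misSize_eq]
    exact h A.card A le_rfl
  intro n
  induction n with
  | zero =>
    intro A hA
    have hAe : A = ∅ := Finset.card_eq_zero.1 (Nat.le_zero.1 hA)
    have hb : branchSet G A = ∅ := by simp [branchSet, hAe]
    rw [hleaf A hb, Mnum_leaf G hb]
  | succ n ih =>
    intro A hA
    rcases Finset.eq_empty_or_nonempty (branchSet G A) with hb | hb
    · rw [hleaf A hb, Mnum_leaf G hb]
    · rw [hrec A hb]
      have hchild : ∀ v ∈ branchSet G A, e (childSet G CMP A v) = Mnum G A := by
        intro v hv
        obtain ⟨hvA, u, huA, hadj⟩ := by simpa [branchSet] using hv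
        have h0 : (A.erase v).card ≤ n := by
          have := Finset.card_erase_of_mem hvA
          omega
        have h1 : (A \ G.neighborFinset v).card ≤ n := by
          have hlt : (A \ G.neighborFinset v).card < A.card := by
            apply Finset.card_lt_card
            refine ⟨Finset.sdiff_subset, fun hsub => ?_⟩
            have : u ∈ A \ G.neighborFinset v := hsub huA
            rw [Finset.mem_sdiff] at this
            exact this.2 ((G.mem_neighborFinset v u).2 hadj)
          omega
        have e0 := ih _ h0
        have e1 := ih _ h1
        have hmax : Mnum G A = max (Mnum G (A.erase v)) (Mnum G (A \ G.neighborFinset v)) :=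
          Mnum_branch G hv
        unfold childSet
        by_cases hc : CMP (A.erase v) (A \ G.neighborFinset v) = false
        · have hle : e (A \ G.neighborFinset v) ≤ e (A.erase v) := (hcons _ _).1 hc
          rw [if_pos hc, e0, hmax]
          rw [e0, e1] at hle
          have : Mnum G (A \ G.neighborFinset v) ≤ Mnum G (A.erase v) := by
            exact_mod_cast hle
          rw [max_eq_left this]
        · have hle : ¬ (e (A \ G.neighborFinset v) ≤ e (A.erase v)) :=
            fun h => hc ((hcons _ _).2 h)
          rw [if_neg hc, e1, hmax]
          rw [e0, e1] at hle
          have : Mnum G (A.erase v) ≤ Mnum G (A \ G.neighborFinset v) := by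
            push_neg at hle
            exact_mod_cast hle.le
          rw [max_eq_right this]
      rw [Finset.sum_congr rfl hchild, Finset.sum_const, nsmul_eq_mul]
      have hcard : ((branchSet G A).card : ℝ) ≠ 0 := by
        exact_mod_cast Finset.card_ne_zero_of_mem hb.choose_spec
      field_simp
end

section
/- Let G = (V, E) be a finite undirected simple graph and v ∈ V with d(v) ≥ 1. Define G₀ as the graph obtained from G by deleting v, deleting all edges incident to vertices in N(v) other than edges already removed, and for each u ∈ N(v) adding a new pendant vertex u' adjacent only to u; define G₁ as the graph obtained from G by deleting all edges incident to v and adding a new pendant vertex v' adjacent only to v. Then the minimum vertex cover sizes satisfy |MVC(G)| = min(|MVC(G₀)|, |MVC(G₁)|). -/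
/-- The size of a minimum vertex cover of `G`. -/
noncomputable def mvcSize {W : Type*} (G : SimpleGraph W) : ℕ :=
  sInf {n | ∃ s : Finset W, (∀ a b, G.Adj a b → a ∈ s ∨ b ∈ s) ∧ s.card = n}

/-- The graph `G₀` of the MVC branching rule: delete `v`, delete all edges incident
to neighbors of `v`, and attach to each neighbor `u` of `v` a new pendant copy `u'`
adjacent only to `u`.  Vertices: `Sum.inl a` are the original vertices `a ≠ v`,
`Sum.inr u` is the pendant copy of the neighbor `u` of `v`. -/
def mvcG0 {V : Type*} (G : SimpleGraph V) (v : V) :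
    SimpleGraph ({a : V // a ≠ v} ⊕ {u : V // G.Adj v u}) :=
  SimpleGraph.fromRel fun x y =>
    match x, y with
    | Sum.inl a, Sum.inl b => G.Adj a.1 b.1 ∧ ¬ G.Adj v a.1 ∧ ¬ G.Adj v b.1
    | Sum.inl a, Sum.inr u => a.1 = u.1
    | _, _ => False

/-- The graph `G₁` of the MVC branching rule: delete all edges incident to `v`
and attach a new pendant vertex `v' = Sum.inr ()` adjacent only to `v`. -/
def mvcG1 {V : Type*} (G : SimpleGraph V) (v : V) : SimpleGraph (V ⊕ Unit) :=
  SimpleGraph.fromRel fun x y =>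
    match x, y with
    | Sum.inl a, Sum.inl b => G.Adj a b ∧ a ≠ v ∧ b ≠ v
    | Sum.inl a, Sum.inr _ => a = v
    | _, _ => False

lemma mvcSize_le' {W : Type*} {G : SimpleGraph W} {s : Finset W}
    (h : ∀ a b, G.Adj a b → a ∈ s ∨ b ∈ s) : mvcSize G ≤ s.card :=
  Nat.sInf_le ⟨s, h, rfl⟩

lemma exists_mvc {W : Type*} [Fintype W] (G : SimpleGraph W) :
    ∃ s : Finset W, (∀ a b, G.Adj a b → a ∈ s ∨ b ∈ s) ∧ s.card = mvcSize G := by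
  have hne : {n | ∃ s : Finset W, (∀ a b, G.Adj a b → a ∈ s ∨ b ∈ s) ∧ s.card = n}.Nonempty :=
    ⟨(Finset.univ : Finset W).card, Finset.univ, fun a b _ => Or.inl (Finset.mem_univ a), rfl⟩
  exact Nat.sInf_mem hne

/-- for any vertex `v` of degree at least 1,
`|MVC(G)| = min (|MVC(G₀)|) (|MVC(G₁)|)`. -/
theorem stmt12 {V : Type*} [Fintype V] (G : SimpleGraph V) (v : V)
    (hd : (G.neighborSet v).Nonempty) :
    mvcSize G = min (mvcSize (mvcG0 G v)) (mvcSize (mvcG1 G v)) := by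
  classical
  haveI : Fintype ({a : V // a ≠ v} ⊕ {u : V // G.Adj v u}) := Fintype.ofFinite _
  refine le_antisymm (le_min ?_ ?_) ?_
  · -- mvcSize G ≤ mvcSize G0
    obtain ⟨s, hs, hc⟩ := exists_mvc (mvcG0 G v)
    rw [← hc]
    refine le_trans (mvcSize_le' (s := s.image (Sum.elim Subtype.val Subtype.val)) ?_)
      Finset.card_image_le
    intro a b hab
    by_cases hva : G.Adj v a
    · left
      have hav : a ≠ v := fun h => G.irrefl (h ▸ hva)
      have hadj : (mvcG0 G v).Adj (Sum.inl ⟨a, hav⟩) (Sum.inr ⟨a, hva⟩) := by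
        rw [mvcG0, SimpleGraph.fromRel_adj]
        exact ⟨by simp, Or.inl rfl⟩
      rcases hs _ _ hadj with h | h
      · exact Finset.mem_image_of_mem _ h
      · exact Finset.mem_image_of_mem _ h
    · by_cases hvb : G.Adj v b
      · right
        have hbv : b ≠ v := fun h => G.irrefl (h ▸ hvb)
        have hadj : (mvcG0 G v).Adj (Sum.inl ⟨b, hbv⟩) (Sum.inr ⟨b, hvb⟩) := by
          rw [mvcG0, SimpleGraph.fromRel_adj]
          exact ⟨by simp, Or.inl rfl⟩
        rcases hs _ _ hadj with h | h
        · exact Finset.mem_image_of_mem _ h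
        · exact Finset.mem_image_of_mem _ h
      · have ha : a ≠ v := fun h => hvb (h ▸ hab)
        have hb : b ≠ v := fun h => hva (h ▸ hab.symm)
        have hadj : (mvcG0 G v).Adj (Sum.inl ⟨a, ha⟩) (Sum.inl ⟨b, hb⟩) := by
          rw [mvcG0, SimpleGraph.fromRel_adj]
          refine ⟨?_, Or.inl ⟨hab, hva, hvb⟩⟩
          intro h
          exact G.ne_of_adj hab (Subtype.ext_iff.mp (Sum.inl_injective h))
        rcases hs _ _ hadj with h | h
        · exact Or.inl (Finset.mem_image_of_mem _ h)
        · exact Or.inr (Finset.mem_image_of_mem _ h)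
  · -- mvcSize G ≤ mvcSize G1
    obtain ⟨s, hs, hc⟩ := exists_mvc (mvcG1 G v)
    rw [← hc]
    refine le_trans (mvcSize_le' (s := s.image (Sum.elim id (fun _ => v))) ?_)
      Finset.card_image_le
    intro a b hab
    have hvmem : v ∈ s.image (Sum.elim id (fun _ => v)) := by
      have hadj : (mvcG1 G v).Adj (Sum.inl v) (Sum.inr ()) := by
        rw [mvcG1, SimpleGraph.fromRel_adj]
        exact ⟨by simp, Or.inl rfl⟩
      rcases hs _ _ hadj with h | h
      · exact Finset.mem_image_of_mem _ h
      · exact Finset.mem_image_of_mem _ h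
    by_cases ha : a = v
    · left
      rw [ha]
      exact hvmem
    · by_cases hb : b = v
      · right
        rw [hb]
        exact hvmem
      · have hadj : (mvcG1 G v).Adj (Sum.inl a) (Sum.inl b) := by
          rw [mvcG1, SimpleGraph.fromRel_adj]
          exact ⟨fun h => G.ne_of_adj hab (Sum.inl_injective h), Or.inl ⟨hab, ha, hb⟩⟩
        rcases hs _ _ hadj with h | h
        · exact Or.inl (Finset.mem_image_of_mem _ h)
        · exact Or.inr (Finset.mem_image_of_mem _ h)
  · -- min ≤ mvcSize G
    obtain ⟨s, hs, hc⟩ := exists_mvc G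
    rw [← hc]
    by_cases hv : v ∈ s
    · refine le_trans (min_le_right _ _) ?_
      have hcov : ∀ x y, (mvcG1 G v).Adj x y →
          x ∈ s.image Sum.inl ∨ y ∈ s.image Sum.inl := by
        intro x y hxy
        rw [mvcG1, SimpleGraph.fromRel_adj] at hxy
        obtain ⟨hne, hr⟩ := hxy
        rcases x with a | u <;> rcases y with b | w
        · simp only at hr
          have hab : G.Adj a b := by
            rcases hr with ⟨h, _⟩ | ⟨h, _⟩
            · exact h
            · exact h.symm
          rcases hs _ _ hab with h | h
          · exact Or.inl (Finset.mem_image_of_mem _ h)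
          · exact Or.inr (Finset.mem_image_of_mem _ h)
        · simp only [or_false] at hr
          subst hr
          exact Or.inl (Finset.mem_image_of_mem _ hv)
        · simp only [false_or] at hr
          subst hr
          exact Or.inr (Finset.mem_image_of_mem _ hv)
        · simp at hr
      calc mvcSize (mvcG1 G v) ≤ (s.image Sum.inl).card := mvcSize_le' hcov
        _ = s.card := Finset.card_image_of_injective s Sum.inl_injective
        _ ≤ s.card := le_rfl
    · refine le_trans (min_le_left _ _) ?_
      have hNs : ∀ u, G.Adj v u → u ∈ s := by
        intro u hu
        rcases hs _ _ hu with h | h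
        · exact absurd h hv
        · exact h
      set f : {x // x ∈ s} → ({a : V // a ≠ v} ⊕ {u : V // G.Adj v u}) :=
        fun a => Sum.inl ⟨a.1, fun h => hv (h ▸ a.2)⟩ with hf
      have hmem : ∀ (a : V) (ha : a ∈ s) (hav : a ≠ v),
          (Sum.inl ⟨a, hav⟩ : {a : V // a ≠ v} ⊕ {u : V // G.Adj v u}) ∈ s.attach.image f := by
        intro a ha hav
        refine Finset.mem_image.mpr ⟨⟨a, ha⟩, Finset.mem_attach _ _, ?_⟩
        exact congrArg Sum.inl (Subtype.ext rfl)
      have hcov : ∀ x y, (mvcG0 G v).Adj x y →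
          x ∈ s.attach.image f ∨ y ∈ s.attach.image f := by
        intro x y hxy
        rw [mvcG0, SimpleGraph.fromRel_adj] at hxy
        obtain ⟨hne, hr⟩ := hxy
        rcases x with a | u <;> rcases y with b | w
        · simp only at hr
          have hab : G.Adj a.1 b.1 := by
            rcases hr with ⟨h, _⟩ | ⟨h, _⟩
            · exact h
            · exact h.symm
          rcases hs _ _ hab with h | h
          · exact Or.inl (by simpa using hmem a.1 h a.2)
          · exact Or.inr (by simpa using hmem b.1 h b.2)
        · simp only [or_false] at hr
          have : a.1 ∈ s := hr ▸ hNs w.1 w.2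
          exact Or.inl (by simpa using hmem a.1 this a.2)
        · simp only [false_or] at hr
          have : b.1 ∈ s := hr ▸ hNs u.1 u.2
          exact Or.inr (by simpa using hmem b.1 this b.2)
        · simp at hr
      have hinj : Function.Injective f := by
        intro a b h
        simp only [hf, Sum.inl.injEq, Subtype.mk.injEq] at h
        exact Subtype.ext h
      calc mvcSize (mvcG0 G v) ≤ (s.attach.image f).card := mvcSize_le' hcov
        _ = s.attach.card := Finset.card_image_of_injective _ hinj
        _ = s.card := Finset.card_attach
end
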